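/- The operator j maps the subspace U(K) + J₂(V(K)) of W × W onto the subspace Ũ + J₂(Ṽ): j({u + J₂ v : u ∈ U(K), v ∈ V(K)}) = {ũ + J₂ ṽ : ũ ∈ Ũ, ṽ ∈ Ṽ}. -/
import Mathlib


open scoped RealInnerProductSpace Pointwise

/-- The one-particle modular conjugation `j(x, y) = (Γ y, Γ x)` maps the
subspace `U(K) + J₂(V(K))` of `W × W` onto `Ũ + J₂(Ṽ)`. -/
theorem modular_conjugation_maps_UV_onto_tilde
    {W : Type*} [NormedAddCommGroup W] [InnerProductSpace ℝ W] [CompleteSpace W]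
    (J s c Γ : W →L[ℝ] W)
    -- J is a complex structure: J ∘ J = -id and J* = -J
    (hJJ : ∀ x, J (J x) = -x)
    (hJadj : ∀ x y : W, ⟪J x, y⟫ = -⟪x, J y⟫)
    -- s, c, Γ are bounded self-adjoint, pairwise commuting
    (hs : ∀ x y : W, ⟪s x, y⟫ = ⟪x, s y⟫)
    (hc : ∀ x y : W, ⟪c x, y⟫ = ⟪x, c y⟫)
    (hΓ : ∀ x y : W, ⟪Γ x, y⟫ = ⟪x, Γ y⟫)
    (hsc : ∀ x, s (c x) = c (s x))
    (hsΓ : ∀ x, s (Γ x) = Γ (s x))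
    (hcΓ : ∀ x, c (Γ x) = Γ (c x))
    -- Γ is an involution and c² − s² = id
    (hΓΓ : ∀ x, Γ (Γ x) = x)
    (hccss : ∀ x, c (c x) - s (s x) = x)
    -- commutation relations with J
    (hsJ : ∀ x, s (J x) = J (s x))
    (hcJ : ∀ x, c (J x) = J (c x))
    (hΓJ : ∀ x, Γ (J x) = -J (Γ x))
    -- K is a closed subspace invariant under Γ, s, c
    (Ksub : Submodule ℝ W) (hKcl : IsClosed (Ksub : Set W))
    (hKΓ : ∀ x ∈ Ksub, Γ x ∈ Ksub)
    (hKs : ∀ x ∈ Ksub, s x ∈ Ksub)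
    (hKc : ∀ x ∈ Ksub, c x ∈ Ksub) :
    (fun z : W × W => (Γ z.2, Γ z.1)) ''
        ({z : W × W | ∃ u ∈ Ksub, z = (Γ (s u), c u)} +
          (fun z : W × W => (J z.1, J z.2)) '' {z : W × W | ∃ v ∈ Ksub, z = (-Γ (s v), c v)}) =
      {z : W × W | ∃ w ∈ Ksub, z = (c w, Γ (s w))} +
        (fun z : W × W => (J z.1, J z.2)) '' {z : W × W | ∃ w ∈ Ksub, z = (c w, -Γ (s w))} := by

  ext z
  simp only [Set.mem_image, Set.mem_add, Set.mem_setOf_eq]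
  constructor
  · rintro ⟨x, ⟨a, ⟨u, hu, rfl⟩, b, ⟨y, ⟨v, hv, rfl⟩, rfl⟩, rfl⟩, rfl⟩
    refine ⟨(c (Γ u), Γ (s (Γ u))), ⟨Γ u, hKΓ u hu, rfl⟩,
      (J (c (-Γ v)), J (-Γ (s (-Γ v)))),
      ⟨(c (-Γ v), -Γ (s (-Γ v))), ⟨-Γ v, Submodule.neg_mem _ (hKΓ v hv), rfl⟩, rfl⟩, ?_⟩
    simp only [Prod.mk_add_mk, Prod.ext_iff, map_add, map_neg, hsΓ, hcΓ, hΓΓ, hΓJ]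
    try constructor <;> abel
  · rintro ⟨a, ⟨w, hw, rfl⟩, b, ⟨y, ⟨w', hw', rfl⟩, rfl⟩, rfl⟩
    refine ⟨(Γ (s (Γ w)), c (Γ w)) + (J (-Γ (s (-Γ w'))), J (c (-Γ w'))),
      ⟨(Γ (s (Γ w)), c (Γ w)), ⟨Γ w, hKΓ w hw, rfl⟩,
       (J (-Γ (s (-Γ w'))), J (c (-Γ w'))),
      ⟨(-Γ (s (-Γ w')), c (-Γ w')), ⟨-Γ w', Submodule.neg_mem _ (hKΓ w' hw'), rfl⟩, rfl⟩, rfl⟩, ?_⟩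
    simp only [Prod.mk_add_mk, Prod.ext_iff, map_add, map_neg, hsΓ, hcΓ, hΓΓ, hΓJ]
    try constructor <;> abel
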